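/- Let (F_n) be a semiring family of graphs and let G and H be finite simple graphs. Then η_F^frac(G ⋉ H) ≤ η_F^frac(G * H) ≤ η_F^frac(G) · η_F^frac(H), i.e., the fractional F-number is submultiplicative under lexicographic and disjunctive products. -/

import Mathlib

open SimpleGraph

universe u v

/-- The join `G + H` of two simple graphs. -/
def graphJoin {α : Type u} {β : Type v} (G : SimpleGraph α) (H : SimpleGraph β) :
    SimpleGraph (α ⊕ β) where
  Adj x y :=
    match x, y with
    | Sum.inl a, Sum.inl a' => G.Adj a a'
    | Sum.inr b, Sum.inr b' => H.Adj b b'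
    | Sum.inl _, Sum.inr _ => True
    | Sum.inr _, Sum.inl _ => True
  symm := by
    constructor
    rintro (a | b) (a' | b') h
    · exact G.symm.symm _ _ h
    · trivial
    · trivial
    · exact H.symm.symm _ _ h
  loopless := by
    constructor
    rintro (a | b) h
    · exact G.loopless.irrefl a h
    · exact H.loopless.irrefl b h

/-- The disjunctive product `G * H`. -/
def disjProd {α : Type u} {β : Type v} (G : SimpleGraph α) (H : SimpleGraph β) :
    SimpleGraph (α × β) where
  Adj p q := G.Adj p.1 q.1 ∨ H.Adj p.2 q.2
  symm := ⟨fun p q h => h.imp (fun h' => G.symm.symm _ _ h') (fun h' => H.symm.symm _ _ h')⟩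
  loopless := ⟨fun p h => h.elim (fun h' => G.loopless.irrefl p.1 h') (fun h' => H.loopless.irrefl p.2 h')⟩

/-- The lexicographic product `G ⋉ H`. -/
def lexProd {α : Type u} {β : Type v} (G : SimpleGraph α) (H : SimpleGraph β) :
    SimpleGraph (α × β) where
  Adj p q := G.Adj p.1 q.1 ∨ (p.1 = q.1 ∧ H.Adj p.2 q.2)
  symm := ⟨fun p q h => h.imp (fun h' => G.symm.symm _ _ h') (fun h' => ⟨h'.1.symm, H.symm.symm _ _ h'.2⟩)⟩
  loopless := ⟨fun p h => h.elim (fun h' => G.loopless.irrefl p.1 h') (fun h' => H.loopless.irrefl p.2 h'.2)⟩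

/-- The `d`-fold blowup `G ⋉ d`, i.e. the lexicographic product `G ⋉ K_d`. -/
def blowup {α : Type u} (G : SimpleGraph α) (d : ℕ) : SimpleGraph (α × Fin d) :=
  lexProd G (⊤ : SimpleGraph (Fin d))

/-- The `d`-fractionalization `G/d`: the graph of `d`-cliques of `G`, with two
`d`-cliques adjacent iff they are disjoint and pairwise adjacent. -/
def fracGraph {α : Type u} (G : SimpleGraph α) (d : ℕ) :
    SimpleGraph {S : Finset α // S.card = d ∧ G.IsClique (S : Set α)} where
  Adj S T := S ≠ T ∧ Disjoint S.val T.val ∧ ∀ a ∈ S.val, ∀ b ∈ T.val, G.Adj a b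
  symm := by
    constructor
    rintro S T ⟨hne, hd, hadj⟩
    exact ⟨hne.symm, hd.symm, fun b hb a ha => (hadj a ha b hb).symm⟩
  loopless := ⟨fun S h => h.1 rfl⟩

/-- The `n`-fold disjunctive power `G^{*n}`. -/
def disjPow {α : Type u} (G : SimpleGraph α) (n : ℕ) :
    SimpleGraph (Fin n → α) where
  Adj f g := ∃ i, G.Adj (f i) (g i)
  symm := ⟨fun f g ⟨i, h⟩ => ⟨i, h.symm⟩⟩
  loopless := ⟨fun f ⟨i, h⟩ => G.loopless.irrefl _ h⟩

/-- A semiring family of graphs. -/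
structure SemiringFamily where
  V : ℕ → Type u
  F : ∀ n, SimpleGraph (V n)
  isEmpty_zero : IsEmpty (V 0)
  nonempty_one : Nonempty (V 1)
  add_hom : ∀ n m : ℕ, Nonempty (graphJoin (F n) (F m) →g F (n + m))
  mul_hom : ∀ n m : ℕ, Nonempty (disjProd (F n) (F m) →g F (n * m))

/-- The `F`-number: the least `n` such that `G → F_n`. -/
noncomputable def etaF (F : SemiringFamily.{u}) {α : Type v} (G : SimpleGraph α) : ℕ :=
  sInf {n : ℕ | Nonempty (G →g F.F n)}

/-- The fractional `F`-number. -/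
noncomputable def etaFrac (F : SemiringFamily.{u}) {α : Type v} (G : SimpleGraph α) : ℝ :=
  sInf {x : ℝ | ∃ n d : ℕ, 1 ≤ d ∧ Nonempty (G →g fracGraph (F.F n) d) ∧ x = (n : ℝ) / d}

/-- The asymptotic `F`-number. -/
noncomputable def etaAsymp (F : SemiringFamily.{u}) {α : Type v} (G : SimpleGraph α) : ℝ :=
  sInf {x : ℝ | ∃ n : ℕ, 1 ≤ n ∧ x = (etaF F (disjPow G n) : ℝ) ^ ((1 : ℝ) / n)}

/-- The orthogonal complement of a set of vertices. -/
def perp {α : Type u} (G : SimpleGraph α) (S : Set α) : Set α :=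
  {v | ∀ s ∈ S, G.Adj v s}

/-- A flat is a set of vertices with `S^{⊥⊥} = S`. -/
def IsFlat {α : Type u} (G : SimpleGraph α) (S : Set α) : Prop :=
  perp G (perp G S) = S

/-- Homomorphic equivalence of two graphs. -/
def HomEquiv {α : Type u} {β : Type v} (G : SimpleGraph α) (H : SimpleGraph β) : Prop :=
  Nonempty (G →g H) ∧ Nonempty (H →g G)

/-- A linear-like semiring family: every flat of `F_n` induces a subgraph with some
clique number `k`, homomorphically equivalent to `F_k`. -/
structure LinearLikeFamily extends SemiringFamily where
  linearLike : ∀ n (S : Set (V n)), IsFlat (F n) S →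
    ∃ k : ℕ, (∃ s : Finset S, ((F n).induce S).IsNClique k s) ∧
      (∀ s : Finset S, ¬ ((F n).induce S).IsNClique (k + 1) s) ∧
      HomEquiv ((F n).induce S) (F k)

/-!
Homomorphisms `G → F_n/d` and `H → F_m/e` combine into `G * H → F_{nm}/(de)`: send `(v, w)` to
the product of the two cliques, pushed into `F_{nm}` along `F_n * F_m → F_{nm}` (a homomorphism
is injective on cliques, so cardinalities are kept). Hence every product of an admissible ratio
for `G` and one for `H` is admissible for `G * H`, and since `G ⋉ H` maps into `G * H` by the
identity, its admissible ratios include those of `G * H`. Both sets of ratios are nonempty because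
`K_m → F_m`, built from `F_k + F_1 → F_{k+1}`.
-/

theorem Real.sInf_le_sInf_mul_sInf {A B C : Set ℝ} (hA : A.Nonempty) (hB : B.Nonempty)
    (hA₀ : ∀ a ∈ A, 0 ≤ a) (hB₀ : ∀ b ∈ B, 0 ≤ b) (hC : BddBelow C)
    (hmul : ∀ a ∈ A, ∀ b ∈ B, a * b ∈ C) : sInf C ≤ sInf A * sInf B := by
  have le_mul_sInf : ∀ a ∈ A, sInf C ≤ a * sInf B := fun a ha => by
    rw [← smul_eq_mul, ← Real.sInf_smul_of_nonneg (hA₀ a ha)]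
    exact csInf_le_csInf hC hB.smul_set (Set.smul_set_subset_iff.2 fun b hb => hmul a ha b hb)
  rw [mul_comm, ← smul_eq_mul, ← Real.sInf_smul_of_nonneg (Real.sInf_nonneg hB₀)]
  refine le_csInf hA.smul_set ?_
  rintro _ ⟨a, ha, rfl⟩
  simpa only [smul_eq_mul, mul_comm] using le_mul_sInf a ha

section GraphHoms

variable {α α' β β' : Type*} {G : SimpleGraph α} {G' : SimpleGraph α'}
  {H : SimpleGraph β} {H' : SimpleGraph β'}

theorem graphJoin_top_top : graphJoin (⊤ : SimpleGraph α) (⊤ : SimpleGraph β) = ⊤ := by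
  ext (a | b) (a' | b') <;> simp [graphJoin]

def graphJoinMap (f : G →g G') (g : H →g H') : graphJoin G H →g graphJoin G' H' where
  toFun := Sum.map f g
  map_rel' := by
    rintro (a | b) (a' | b') h
    exacts [f.map_adj h, trivial, trivial, g.map_adj h]

def disjProdMap (f : G →g G') (g : H →g H') : disjProd G H →g disjProd G' H' where
  toFun := Prod.map f g
  map_rel' h := h.imp f.map_adj g.map_adj

theorem lexProd_le_disjProd : lexProd G H ≤ disjProd G H :=
  fun _ _ h => h.imp id And.right

theorem SimpleGraph.IsClique.disjProd {S : Set α} {T : Set β} (hS : G.IsClique S)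
    (hT : H.IsClique T) : (disjProd G H).IsClique (S ×ˢ T) := by
  rintro x ⟨hx₁, hx₂⟩ y ⟨hy₁, hy₂⟩ hxy
  by_cases h : x.1 = y.1
  · exact Or.inr (hT hx₂ hy₂ fun h' => hxy (Prod.ext h h'))
  · exact Or.inl (hS hx₁ hy₁ h)

theorem SimpleGraph.Hom.injOn_of_isClique (φ : G →g G') {S : Set α} (hS : G.IsClique S) :
    Set.InjOn φ S := fun _ hx _ hy hφ =>
  by_contra fun hne => (φ.map_adj (hS hx hy hne)).ne hφ

theorem fracGraph_pos_of_adj {d : ℕ} {S T} (h : (fracGraph G d).Adj S T) : 0 < d := by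
  refine Nat.pos_of_ne_zero fun hd => h.1 (Subtype.ext ?_)
  rw [Finset.card_eq_zero.1 (S.2.1.trans hd), Finset.card_eq_zero.1 (T.2.1.trans hd)]

theorem fracGraph_adj_iff {d : ℕ} (hd : 0 < d) {S T} :
    (fracGraph G d).Adj S T ↔ ∀ a ∈ S.1, ∀ b ∈ T.1, G.Adj a b := by
  refine ⟨fun h => h.2.2, fun h => ?_⟩
  have hdisj : Disjoint S.1 T.1 :=
    Finset.disjoint_left.2 fun a ha ha' => G.loopless.irrefl a (h a ha a ha')
  refine ⟨fun hST => ?_, hdisj, h⟩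
  obtain ⟨a, ha⟩ := Finset.card_pos.1 (S.2.1 ▸ hd)
  exact Finset.disjoint_left.1 hdisj ha (hST ▸ ha)

def fracGraphSingleton (G : SimpleGraph α) : G →g fracGraph G 1 where
  toFun a := ⟨{a}, Finset.card_singleton a, by simp⟩
  map_rel' h := (fracGraph_adj_iff one_pos).2 <| by simpa using h

def SimpleGraph.Hom.fracGraphMap [DecidableEq α'] (φ : G →g G') (d : ℕ) :
    fracGraph G d →g fracGraph G' d where
  toFun S := ⟨S.1.image φ,
    by rw [Finset.card_image_of_injOn (φ.injOn_of_isClique S.2.2), S.2.1],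
    by
      rw [Finset.coe_image]
      rintro _ ⟨a, ha, rfl⟩ _ ⟨b, hb, rfl⟩ hab
      exact φ.map_adj (S.2.2 ha hb fun h => hab (h ▸ rfl))⟩
  map_rel' {S T} h := by
    refine (fracGraph_adj_iff (fracGraph_pos_of_adj h)).2 ?_
    simp only [Finset.mem_image]
    rintro _ ⟨a, ha, rfl⟩ _ ⟨b, hb, rfl⟩
    exact φ.map_adj (h.2.2 a ha b hb)

def fracGraphDisjProd {d e : ℕ} (hd : 0 < d) (he : 0 < e) :
    disjProd (fracGraph G d) (fracGraph H e) →g fracGraph (disjProd G H) (d * e) where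
  toFun p := ⟨p.1.1 ×ˢ p.2.1, by rw [Finset.card_product, p.1.2.1, p.2.2.1],
    by simpa using p.1.2.2.disjProd p.2.2.2⟩
  map_rel' {p q} h := by
    refine (fracGraph_adj_iff (Nat.mul_pos hd he)).2 ?_
    simp only [Finset.mem_product]
    rintro x ⟨hx₁, hx₂⟩ y ⟨hy₁, hy₂⟩
    exact h.imp (fun h => (fracGraph_adj_iff hd).1 h _ hx₁ _ hy₁)
      (fun h => (fracGraph_adj_iff he).1 h _ hx₂ _ hy₂)

end GraphHoms

theorem SemiringFamily.nonempty_completeGraph_hom (F : SemiringFamily.{u}) (m : ℕ) :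
    Nonempty (completeGraph (Fin m) →g F.F m) := by
  induction m with
  | zero => exact ⟨⟨Fin.elim0, fun {a} => a.elim0⟩⟩
  | succ m ih =>
    obtain ⟨f⟩ := ih
    obtain ⟨v⟩ := F.nonempty_one
    obtain ⟨φ⟩ := F.add_hom m 1
    let k₁ : completeGraph (Fin 1) →g F.F 1 :=
      ⟨fun _ => v, fun {a b} h => absurd (Subsingleton.elim a b) h⟩
    exact ⟨φ.comp <| (graphJoinMap f k₁).comp <| (Hom.ofLE graphJoin_top_top.ge).comp
      (Iso.completeGraph finSumFinEquiv.symm).toHom⟩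

def etaFracSet (F : SemiringFamily.{u}) {α : Type*} (G : SimpleGraph α) : Set ℝ :=
  {x | ∃ n d : ℕ, 1 ≤ d ∧ Nonempty (G →g fracGraph (F.F n) d) ∧ x = (n : ℝ) / d}

section EtaFracSet

variable {F : SemiringFamily.{u}} {α β α' : Type*} {G : SimpleGraph α} {H : SimpleGraph β}

theorem etaFracSet_nonneg (G : SimpleGraph α) : ∀ x ∈ etaFracSet F G, 0 ≤ x := by
  rintro _ ⟨n, d, -, -, rfl⟩
  positivity

theorem bddBelow_etaFracSet (G : SimpleGraph α) : BddBelow (etaFracSet F G) :=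
  ⟨0, etaFracSet_nonneg G⟩

theorem etaFracSet_nonempty [Fintype α] (G : SimpleGraph α) : (etaFracSet F G).Nonempty := by
  obtain ⟨φ⟩ := F.nonempty_completeGraph_hom (Fintype.card α)
  exact ⟨_, _, 1, le_rfl, ⟨(fracGraphSingleton _).comp <| φ.comp <|
    (Iso.completeGraph (Fintype.equivFin α)).toHom.comp (Hom.ofLE le_top)⟩, rfl⟩

theorem etaFracSet_anti {G' : SimpleGraph α'} (f : G →g G') :
    etaFracSet F G' ⊆ etaFracSet F G := by
  rintro _ ⟨n, d, hd, ⟨g⟩, rfl⟩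
  exact ⟨n, d, hd, ⟨g.comp f⟩, rfl⟩

theorem mul_mem_etaFracSet_disjProd {x y : ℝ} (hx : x ∈ etaFracSet F G)
    (hy : y ∈ etaFracSet F H) : x * y ∈ etaFracSet F (disjProd G H) := by
  classical
  obtain ⟨n, d, hd, ⟨f⟩, rfl⟩ := hx
  obtain ⟨m, e, he, ⟨g⟩, rfl⟩ := hy
  obtain ⟨μ⟩ := F.mul_hom n m
  refine ⟨n * m, d * e, Nat.one_le_iff_ne_zero.2 (by positivity), ⟨(μ.fracGraphMap _).comp <|
    (fracGraphDisjProd hd he).comp (disjProdMap f g)⟩, ?_⟩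
  push_cast
  exact div_mul_div_comm _ _ _ _

end EtaFracSet

/-- The fractional `F`-number is submultiplicative under lexicographic and
disjunctive products. -/
theorem etaFrac_submultiplicative (F : SemiringFamily.{u}) {α : Type v} {β : Type w}
    [Fintype α] [Fintype β] (G : SimpleGraph α) (H : SimpleGraph β) :
    etaFrac F (lexProd G H) ≤ etaFrac F (disjProd G H) ∧
      etaFrac F (disjProd G H) ≤ etaFrac F G * etaFrac F H := by
  constructor
  · exact csInf_le_csInf (bddBelow_etaFracSet _) (etaFracSet_nonempty _)
      (etaFracSet_anti (Hom.ofLE lexProd_le_disjProd))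
  · exact Real.sInf_le_sInf_mul_sInf (etaFracSet_nonempty G) (etaFracSet_nonempty H)
      (etaFracSet_nonneg G) (etaFracSet_nonneg H) (bddBelow_etaFracSet _)
      fun _ hx _ hy => mul_mem_etaFracSet_disjProd hx hy
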